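/- Suppose k = k(n) satisfies k ≫ n^{1/3} and k ≪ n/log n. Let λ_3 = ( (k/n^{1/3}) log(k/n^{1/3}) )^{1/2} and m_3 = (n/2)(1 − λ_3 n^{−1/3}). Then a.a.s. for every m ≥ m_3, the size of every non-special component of Ĝ_k(n,m) is at most n log n / k. -/

import Mathlib

open Filter SimpleGraph Asymptotics
open scoped Topology

noncomputable section

attribute [local instance] Classical.propDecidable

/-- The number of vertex pairs among `n` vertices. -/
def numPairs (n : ℕ) : ℕ := n.choose 2

/-- A sequence of `n.choose 2` unordered pairs of vertices. -/
abbrev EdgeSeq (n : ℕ) := Fin (numPairs n) → Sym2 (Fin n)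

/-- Orderings of all non-diagonal vertex pairs. -/
def edgeOrderings (n : ℕ) : Finset (EdgeSeq n) :=
  Finset.univ.filter fun f => Function.Injective f ∧ ∀ i, ¬ (f i).IsDiag

/-- The sample space: a uniformly random ordering of all pairs together with a uniformly
random set of `k` special vertices. -/
def sample (n k : ℕ) : Finset (EdgeSeq n × Finset (Fin n)) :=
  (edgeOrderings n) ×ˢ (Finset.univ.powersetCard k)

/-- Probability of the event `A` over a random ordering and a random special set. -/
def Pr (n k : ℕ) (A : EdgeSeq n → Finset (Fin n) → Prop) : ℝ :=
  (((sample n k).filter fun p => A p.1 p.2).card : ℝ) / ((sample n k).card : ℝ)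

/-- Probability of the event `A` over a random ordering only. -/
def PrOrd (n : ℕ) (A : EdgeSeq n → Prop) : ℝ :=
  (((edgeOrderings n).filter A).card : ℝ) / ((edgeOrderings n).card : ℝ)

/-- `A` holds asymptotically almost surely. -/
def AAS (k : ℕ → ℕ) (A : (n : ℕ) → EdgeSeq n → Finset (Fin n) → Prop) : Prop :=
  Tendsto (fun n => Pr n (k n) (A n)) atTop (nhds 1)

variable {V : Type*}

/-- Add the pair `e` as an edge. -/
def addEdge (G : SimpleGraph V) (e : Sym2 V) : SimpleGraph V :=
  SimpleGraph.fromEdgeSet (insert e G.edgeSet)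

/-- Adding `e` to `G` would join two components, each containing a special vertex. -/
def collides (S : Finset V) (G : SimpleGraph V) (e : Sym2 V) : Prop :=
  ∃ u v : V, e = s(u, v) ∧ ¬ G.Reachable u v ∧
    (∃ a ∈ S, G.Reachable u a) ∧ (∃ b ∈ S, G.Reachable v b)

/-- One step of the constrained process. -/
def hatStep (S : Finset V) (G : SimpleGraph V) (e : Sym2 V) : SimpleGraph V :=
  if collides S G e then G else addEdge G e

/-- The constrained graph built greedily from a list of pairs: each pair is added in turn
unless it would put two special vertices in the same component. -/
def hatList (S : Finset V) (l : List (Sym2 V)) : SimpleGraph V :=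
  l.foldl (hatStep S) ⊥

/-- The graph `Ĝ_k(n,m)` of the constrained process. -/
def hatG {n : ℕ} (S : Finset (Fin n)) (f : EdgeSeq n) (m : ℕ) : SimpleGraph (Fin n) :=
  hatList S ((List.ofFn f).take m)

/-- The graph `G(n,m)` of the Erdős–Rényi process. -/
def gnm {n : ℕ} (f : EdgeSeq n) (m : ℕ) : SimpleGraph (Fin n) :=
  SimpleGraph.fromEdgeSet {e | ∃ i : Fin (numPairs n), (i : ℕ) < m ∧ f i = e}

/-- The number of vertices of the connected component `C`. -/
def compSize [Fintype V] (G : SimpleGraph V) (C : G.ConnectedComponent) : ℕ :=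
  (Finset.univ.filter fun v => G.connectedComponentMk v = C).card

/-- The components of `G`, as a `Finset`. -/
def components [Fintype V] (G : SimpleGraph V) : Finset G.ConnectedComponent :=
  Finset.univ.image G.connectedComponentMk

/-- The number of connected components of `G`. -/
def numComponents [Fintype V] (G : SimpleGraph V) : ℕ := (components G).card

/-- The sizes of the components of `G`, sorted increasingly. -/
def compSizes [Fintype V] (G : SimpleGraph V) : List ℕ :=
  ((components G).val.map (compSize G)).sort (· ≤ ·)

/-- `L G i` is the size of the `i`-th largest component of `G` (`i = 1, 2, …`). -/
def L [Fintype V] (G : SimpleGraph V) (i : ℕ) : ℕ :=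
  (compSizes G).reverse.getD (i - 1) 0

/-- A component is special if it contains a special vertex. -/
def specialComp (S : Finset V) (G : SimpleGraph V) (C : G.ConnectedComponent) : Prop :=
  ∃ v ∈ S, G.connectedComponentMk v = C

/-- The sizes of the special components of `G`, sorted increasingly. -/
def specialCompSizes [Fintype V] (S : Finset V) (G : SimpleGraph V) : List ℕ :=
  (((components G).filter (specialComp S G)).val.map (compSize G)).sort (· ≤ ·)

/-- `Lhat S G i` is the size of the `i`-th largest special component of `G`. -/
def Lhat [Fintype V] (S : Finset V) (G : SimpleGraph V) (i : ℕ) : ℕ :=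
  (specialCompSizes S G).reverse.getD (i - 1) 0

/-- The number of edges of `G`. -/
def numEdges [Fintype V] (G : SimpleGraph V) : ℕ :=
  (Finset.univ.filter fun e : Sym2 V => e ∈ G.edgeSet).card

/-- `M(n,k)`: the number of edges at the end of the constrained process. -/
def Mfinal {n : ℕ} (S : Finset (Fin n)) (f : EdgeSeq n) : ℕ :=
  numEdges (hatG S f (numPairs n))

/-- `M̂(n,k)`: the first time at which the constrained process has exactly `k` components. -/
def Mhat {n : ℕ} (k : ℕ) (S : Finset (Fin n)) (f : EdgeSeq n) : ℕ :=
  sInf {m : ℕ | numComponents (hatG S f m) = k}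

end

noncomputable section
attribute [local instance] Classical.propDecidable

/-- `λ₃ = ((k/n^{1/3}) log(k/n^{1/3}))^{1/2}`. -/
def lam3 (k : ℕ → ℕ) (n : ℕ) : ℝ :=
  Real.sqrt (((k n : ℝ) / (n : ℝ) ^ ((1 : ℝ) / 3)) *
    Real.log ((k n : ℝ) / (n : ℝ) ^ ((1 : ℝ) / 3)))

/-- `m₃ = (n/2)(1 − λ₃ n^{−1/3})`. -/
def m3 (k : ℕ → ℕ) (n : ℕ) : ℕ :=
  ⌊((n : ℝ) / 2) * (1 - lam3 k n * (n : ℝ) ^ (-(1 : ℝ) / 3))⌋₊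

end

/-!
A non-special component of `Ĝ_k(n,m)` is a component of `G(n,m)`: an edge of `G(n,m)` at such a
component was never rejected, because a rejected edge touches two special components and special
components only grow. Hence if some non-special component has at least `t` vertices, then for each
of its vertices `u`, the component of `u` in the process `G(n,·)` at the first time it reaches `t`
vertices avoids the special set `S`. That first-passage set depends on the ordering only, so a
uniform `k`-set `S` avoids it with probability `C(n-t,k)/C(n,k) ≤ e^{-tk/n}`. Double counting the
pairs `(S,u)` bounds the probability that a non-special component ever exceeds `x` vertices by
`n e^{-kx/n}/x`, which is `k/(n log n) → 0` for `x = n log n / k`.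
-/

open Finset

noncomputable section

attribute [local instance] Classical.propDecidable

section Reachability

variable {V : Type*} [Fintype V]

def reachSet (G : SimpleGraph V) (u : V) : Finset V := univ.filter (G.Reachable u)

lemma compSize_connectedComponentMk (G : SimpleGraph V) (v : V) :
    compSize G (G.connectedComponentMk v) = #(reachSet G v) := by
  unfold compSize reachSet
  congr 1
  ext u
  simp [SimpleGraph.ConnectedComponent.eq, SimpleGraph.reachable_comm]

lemma reachSet_mono {G H : SimpleGraph V} (h : G ≤ H) (u : V) : reachSet G u ⊆ reachSet H u := by
  intro w hw
  simp only [reachSet, mem_filter, mem_univ, true_and] at hw ⊢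
  exact hw.mono h

lemma reachSet_eq_of_reachable {G : SimpleGraph V} {u v : V} (h : G.Reachable u v) :
    reachSet G u = reachSet G v := by
  ext w
  simp only [reachSet, mem_filter, mem_univ, true_and]
  exact ⟨h.symm.trans, h.trans⟩

variable (G : ℕ → SimpleGraph V) (t : ℕ)

/-- The component of `u` in `G m` at the first time `m` at which it has at least `t` vertices
(the component at time `0` if there is no such time). -/
def firstBigReachSet (u : V) : Finset V :=
  reachSet (G (sInf {m | t ≤ #(reachSet (G m) u)})) u

def FirstBigAvoids (S : Finset V) (u : V) : Prop :=
  (∃ m, t ≤ #(reachSet (G m) u)) ∧ Disjoint S (firstBigReachSet G t u)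

def HasLargeAvoidingComponent (S : Finset V) : Prop :=
  ∃ m v, t ≤ #(reachSet (G m) v) ∧ Disjoint S (reachSet (G m) v)

variable {G t}

lemma le_card_firstBigReachSet {m : ℕ} {u : V} (h : t ≤ #(reachSet (G m) u)) :
    t ≤ #(firstBigReachSet G t u) :=
  Nat.sInf_mem (s := {m | t ≤ #(reachSet (G m) u)}) ⟨m, h⟩

lemma firstBigReachSet_subset (hG : Monotone G) {m : ℕ} {u : V}
    (h : t ≤ #(reachSet (G m) u)) : firstBigReachSet G t u ⊆ reachSet (G m) u :=
  reachSet_mono (hG (Nat.sInf_le (s := {m | t ≤ #(reachSet (G m) u)}) h)) u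

lemma le_card_filter_firstBigAvoids (hG : Monotone G) {S : Finset V}
    (hS : HasLargeAvoidingComponent G t S) : t ≤ #(univ.filter (FirstBigAvoids G t S)) := by
  obtain ⟨m, v, hcard, hdisj⟩ := hS
  refine hcard.trans (card_le_card fun u hu => ?_)
  have hvu : reachSet (G m) u = reachSet (G m) v :=
    (reachSet_eq_of_reachable (by simpa [reachSet] using hu)).symm
  rw [← hvu] at hcard hdisj
  simpa [FirstBigAvoids] using ⟨⟨m, hcard⟩, hdisj.mono_right (firstBigReachSet_subset hG hcard)⟩

lemma card_filter_firstBigAvoids_le (k : ℕ) (u : V) :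
    #((univ.powersetCard k).filter (FirstBigAvoids G t · u)) ≤ (Fintype.card V - t).choose k := by
  by_cases h : ∃ m, t ≤ #(reachSet (G m) u)
  · obtain ⟨m, hm⟩ := h
    set D := firstBigReachSet G t u
    calc #((univ.powersetCard k).filter (FirstBigAvoids G t · u))
        ≤ #((univ \ D).powersetCard k) := by
          refine card_le_card fun S hS => ?_
          obtain ⟨hSk, -, hdisj⟩ := mem_filter.1 hS
          rw [mem_powersetCard] at hSk ⊢
          exact ⟨fun a ha => mem_sdiff.2 ⟨mem_univ a, disjoint_left.1 hdisj ha⟩, hSk.2⟩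
      _ = (Fintype.card V - #D).choose k := by
        rw [card_powersetCard, card_sdiff_of_subset (subset_univ D), card_univ]
      _ ≤ (Fintype.card V - t).choose k :=
        Nat.choose_le_choose k (Nat.sub_le_sub_left (le_card_firstBigReachSet hm) _)
  · rw [filter_false_of_mem fun S _ hS => h hS.1, card_empty]
    exact Nat.zero_le _

lemma mul_card_filter_hasLargeAvoidingComponent_le (hG : Monotone G) (k : ℕ) :
    t * #((univ.powersetCard k).filter (HasLargeAvoidingComponent G t)) ≤
      Fintype.card V * (Fintype.card V - t).choose k := by
  rw [mul_comm, ← card_univ]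
  exact card_mul_le_card_mul (FirstBigAvoids G t)
    (fun S hS => le_card_filter_firstBigAvoids hG (mem_filter.1 hS).2)
    (fun u _ => (card_le_card (filter_subset_filter _ (filter_subset _ _))).trans
      (card_filter_firstBigAvoids_le k u))

end Reachability

lemma Nat.sub_sub_mul_le_sub_mul_sub (n t k : ℕ) : (n - t - k) * n ≤ (n - k) * (n - t) := by
  rcases le_total (t + k) n with h | h
  · obtain ⟨r, rfl⟩ := Nat.exists_eq_add_of_le h
    rw [show t + k + r - t - k = r by omega, show t + k + r - k = t + r by omega,
      show t + k + r - t = k + r by omega]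
    nlinarith
  · rw [show n - t - k = 0 by omega, zero_mul]
    exact Nat.zero_le _

lemma Nat.choose_sub_mul_pow_le (n t k : ℕ) :
    (n - t).choose k * n ^ k ≤ n.choose k * (n - t) ^ k := by
  induction k with
  | zero => simp
  | succ k ih =>
    refine Nat.le_of_mul_le_mul_right ?_ k.succ_pos
    calc (n - t).choose (k + 1) * n ^ (k + 1) * (k + 1)
        = (n - t).choose k * n ^ k * ((n - t - k) * n) := by
          rw [mul_right_comm, Nat.choose_succ_right_eq]; ring
      _ ≤ n.choose k * (n - t) ^ k * ((n - k) * (n - t)) :=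
          Nat.mul_le_mul ih (Nat.sub_sub_mul_le_sub_mul_sub n t k)
      _ = n.choose (k + 1) * (n - t) ^ (k + 1) * (k + 1) := by
          rw [mul_right_comm _ _ (k + 1), Nat.choose_succ_right_eq]; ring

lemma choose_sub_le_choose_mul_exp (n t k : ℕ) :
    ((n - t).choose k : ℝ) ≤ n.choose k * Real.exp (-(t * k / n)) := by
  rcases Nat.eq_zero_or_pos n with rfl | hn
  · simp
  have hnR : (0 : ℝ) < n := Nat.cast_pos.2 hn
  have hsub : ((n - t : ℕ) : ℝ) ≤ n * Real.exp (-(t / n)) := by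
    rcases le_total t n with htn | hnt
    · calc ((n - t : ℕ) : ℝ) = n * (1 - t / n) := by rw [Nat.cast_sub htn]; field_simp
        _ ≤ n * Real.exp (-(t / n)) := by gcongr; exact Real.one_sub_le_exp_neg _
    · rw [Nat.sub_eq_zero_of_le hnt, Nat.cast_zero]
      positivity
  have hratio : ((n - t).choose k : ℝ) * n ^ k ≤ n.choose k * ((n - t : ℕ) : ℝ) ^ k := by
    exact_mod_cast Nat.choose_sub_mul_pow_le n t k
  refine le_of_mul_le_mul_right ?_ (pow_pos hnR k)
  calc ((n - t).choose k : ℝ) * n ^ k ≤ n.choose k * ((n - t : ℕ) : ℝ) ^ k := hratio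
    _ ≤ n.choose k * (n * Real.exp (-(t / n))) ^ k := by gcongr
    _ = n.choose k * Real.exp (-(t * k / n)) * n ^ k := by
      rw [mul_pow, ← Real.exp_nat_mul]; ring_nf

section Constrained

variable {V : Type*}

lemma le_addEdge (G : SimpleGraph V) (e : Sym2 V) : G ≤ addEdge G e := by
  conv_lhs => rw [← fromEdgeSet_edgeSet G]
  exact fromEdgeSet_mono (Set.subset_insert _ _)

lemma le_hatStep (S : Finset V) (G : SimpleGraph V) (e : Sym2 V) : G ≤ hatStep S G e := by
  unfold hatStep
  split
  · exact le_rfl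
  · exact le_addEdge G e

lemma le_foldl_hatStep (S : Finset V) (l : List (Sym2 V)) (G : SimpleGraph V) :
    G ≤ l.foldl (hatStep S) G := by
  induction l generalizing G with
  | nil => exact le_rfl
  | cons e l ih => exact (le_hatStep S G e).trans (ih _)

lemma edgeSet_foldl_hatStep_subset (S : Finset V) (l : List (Sym2 V)) (G : SimpleGraph V) :
    (l.foldl (hatStep S) G).edgeSet ⊆ G.edgeSet ∪ {e | e ∈ l} := by
  induction l generalizing G with
  | nil => simp
  | cons e l ih =>
    refine (ih (hatStep S G e)).trans ?_
    rintro x (hx | hx)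
    · unfold hatStep at hx
      split at hx
      · exact Or.inl hx
      · rw [addEdge, edgeSet_fromEdgeSet] at hx
        rcases hx.1 with rfl | hx
        · exact Or.inr (List.mem_cons_self ..)
        · exact Or.inl hx
    · exact Or.inr (List.mem_cons_of_mem _ hx)

variable {n : ℕ} (S : Finset (Fin n)) (f : EdgeSeq n)

lemma hatG_mono : Monotone (hatG S f) := by
  intro m m' h
  unfold hatG hatList
  rw [← List.take_append_drop m ((List.ofFn f).take m'), List.take_take, min_eq_left h,
    List.foldl_append]
  exact le_foldl_hatStep _ _ _

lemma hatG_succ (i : Fin (numPairs n)) :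
    hatG S f (i + 1) = hatStep S (hatG S f i) (f i) := by
  unfold hatG hatList
  rw [List.take_add_one, List.getElem?_ofFn, dif_pos i.isLt, List.foldl_append]
  simp

lemma gnm_mono : Monotone (gnm f) := by
  intro m m' h
  apply fromEdgeSet_mono
  rintro e ⟨i, him, hfi⟩
  exact ⟨i, him.trans_le h, hfi⟩

lemma hatG_le_gnm (m : ℕ) : hatG S f m ≤ gnm f m := by
  intro u v huv
  rw [gnm, fromEdgeSet_adj]
  refine ⟨?_, huv.ne⟩
  have huv' : s(u, v) ∈ (hatG S f m).edgeSet := huv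
  rcases edgeSet_foldl_hatStep_subset S ((List.ofFn f).take m) ⊥ huv' with h | h
  · simp at h
  obtain ⟨j, hj, hget⟩ := List.getElem_of_mem h
  rw [List.length_take, List.length_ofFn] at hj
  exact ⟨⟨j, (lt_min_iff.1 hj).2⟩, (lt_min_iff.1 hj).1, by rw [← hget, List.getElem_take,
    List.getElem_ofFn]⟩

variable {S f}

/-- A rejected pair joins two special components, and components only grow, so a `G(n,m)`-edge at
a vertex outside every special component of `Ĝ_k(n,m)` was accepted. -/
lemma hatG_adj_of_gnm_adj {m : ℕ} {u x : Fin n} (hu : ¬ ∃ a ∈ S, (hatG S f m).Reachable u a)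
    (h : (gnm f m).Adj u x) : (hatG S f m).Adj u x := by
  obtain ⟨⟨i, him, hfi⟩, hne⟩ := (fromEdgeSet_adj _).1 h
  by_cases hc : collides S (hatG S f i) (f i)
  · obtain ⟨u', v', he, -, hsu, hsv⟩ := hc
    have hgrow := hatG_mono S f him.le
    refine absurd ?_ hu
    rcases Sym2.eq_iff.1 (hfi ▸ he) with ⟨rfl, -⟩ | ⟨rfl, -⟩
    · obtain ⟨a, ha, hr⟩ := hsu
      exact ⟨a, ha, hr.mono hgrow⟩
    · obtain ⟨a, ha, hr⟩ := hsv
      exact ⟨a, ha, hr.mono hgrow⟩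
  · have hadd : (hatG S f (i + 1)).Adj u x := by
      rw [hatG_succ, hatStep, if_neg hc, addEdge, fromEdgeSet_adj, hfi]
      exact ⟨Set.mem_insert _ _, hne⟩
    exact hatG_mono S f him hadd

lemma reachable_hatG_iff_gnm {m : ℕ} {v : Fin n} (hv : ¬ ∃ a ∈ S, (hatG S f m).Reachable v a)
    (u : Fin n) : (hatG S f m).Reachable v u ↔ (gnm f m).Reachable v u := by
  refine ⟨fun h => h.mono (hatG_le_gnm S f m), fun ⟨p⟩ => ?_⟩
  suffices ∀ w x, (hatG S f m).Reachable v w → (gnm f m).Walk w x → (hatG S f m).Reachable v x from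
    this v u .rfl p
  intro w x hvw q
  induction q with
  | nil => exact hvw
  | cons h _ ih =>
    have hw : ¬ ∃ a ∈ S, (hatG S f m).Reachable _ a :=
      fun ⟨a, ha, hr⟩ => hv ⟨a, ha, hvw.trans hr⟩
    exact ih (hvw.trans (hatG_adj_of_gnm_adj hw h).reachable)

lemma compSize_hatG_of_nonspecial {m : ℕ} {v : Fin n}
    (hv : ¬ ∃ a ∈ S, (hatG S f m).Reachable v a) :
    compSize (hatG S f m) ((hatG S f m).connectedComponentMk v) = #(reachSet (gnm f m) v) := by
  rw [compSize_connectedComponentMk]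
  congr 1
  ext u
  simp only [reachSet, mem_filter, mem_univ, true_and, reachable_hatG_iff_gnm hv]

end Constrained

section Probability

variable {n k : ℕ}

lemma edgeOrderings_nonempty (n : ℕ) : (edgeOrderings n).Nonempty := by
  have hcard : Fintype.card (Fin (numPairs n)) = Fintype.card {e : Sym2 (Fin n) // ¬ e.IsDiag} := by
    rw [Sym2.card_subtype_not_diag, Fintype.card_fin, Fintype.card_fin]
    rfl
  obtain ⟨e⟩ := Fintype.card_eq.1 hcard
  refine ⟨fun i => e i, ?_⟩
  rw [edgeOrderings, mem_filter]
  exact ⟨mem_univ _, fun i j h => e.injective (Subtype.ext h), fun i => (e i).2⟩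

lemma card_sample (n k : ℕ) : #(sample n k) = #(edgeOrderings n) * n.choose k := by
  rw [sample, card_product, card_powersetCard, card_univ, Fintype.card_fin]

lemma card_filter_sample (A : EdgeSeq n → Finset (Fin n) → Prop) :
    #((sample n k).filter fun p => A p.1 p.2) =
      ∑ f ∈ edgeOrderings n, #((univ.powersetCard k).filter (A f)) := by
  simp only [sample, card_filter, sum_product]

lemma Pr_le_one (A : EdgeSeq n → Finset (Fin n) → Prop) : Pr n k A ≤ 1 :=
  div_le_one_of_le₀ (by exact_mod_cast card_le_card (filter_subset _ _)) (Nat.cast_nonneg _)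

lemma Pr_mono {A B : EdgeSeq n → Finset (Fin n) → Prop} (h : ∀ f S, A f S → B f S) :
    Pr n k A ≤ Pr n k B := by
  unfold Pr
  gcongr
  exact h _ _

lemma Pr_add_Pr_not (hk : k ≤ n) (A : EdgeSeq n → Finset (Fin n) → Prop) :
    Pr n k A + Pr n k (fun f S => ¬ A f S) = 1 := by
  have hpos : (0 : ℝ) < #(sample n k) := by
    rw [card_sample]
    exact_mod_cast Nat.mul_pos (edgeOrderings_nonempty n).card_pos (Nat.choose_pos hk)
  rw [Pr, Pr, ← add_div, div_eq_one_iff_eq hpos.ne']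
  norm_cast
  convert card_filter_add_card_filter_not (s := sample n k) fun p => A p.1 p.2

lemma Pr_le_of_card_filter_le {A : EdgeSeq n → Finset (Fin n) → Prop} {c : ℝ} (hc : 0 ≤ c)
    (h : ∀ f, (#((univ.powersetCard k).filter (A f)) : ℝ) ≤ c * n.choose k) :
    Pr n k A ≤ c := by
  rw [Pr, card_filter_sample, card_sample]
  rcases eq_or_lt_of_le (Nat.zero_le (#(edgeOrderings n) * n.choose k)) with h0 | hpos
  · rw [← h0, Nat.cast_zero, div_zero]
    exact hc
  rw [div_le_iff₀ (by exact_mod_cast hpos)]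
  push_cast
  calc (∑ f ∈ edgeOrderings n, (#((univ.powersetCard k).filter (A f)) : ℝ))
      ≤ ∑ _f ∈ edgeOrderings n, c * n.choose k := sum_le_sum fun f _ => h f
    _ = c * (#(edgeOrderings n) * n.choose k) := by rw [sum_const, nsmul_eq_mul]; ring

end Probability

def NonspecialComponentsBoundedBy {n : ℕ} (x : ℝ) (f : EdgeSeq n) (S : Finset (Fin n)) : Prop :=
  ∀ m v, (¬ ∃ a ∈ S, (hatG S f m).Reachable v a) →
    (compSize (hatG S f m) ((hatG S f m).connectedComponentMk v) : ℝ) ≤ x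

lemma hasLargeAvoidingComponent_of_not_bounded {n : ℕ} {x : ℝ} {f : EdgeSeq n}
    {S : Finset (Fin n)} (h : ¬ NonspecialComponentsBoundedBy x f S) :
    HasLargeAvoidingComponent (gnm f) ⌈x⌉₊ S := by
  simp only [NonspecialComponentsBoundedBy, not_forall, not_le] at h
  obtain ⟨m, v, hv, hx⟩ := h
  rw [compSize_hatG_of_nonspecial hv] at hx
  refine ⟨m, v, Nat.ceil_le.2 hx.le, disjoint_left.2 fun a ha hav => hv ⟨a, ha, ?_⟩⟩
  exact (reachable_hatG_iff_gnm hv a).2 (by simpa [reachSet] using hav)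

theorem Pr_not_nonspecialComponentsBoundedBy_le {n k : ℕ} {x : ℝ} (hx : 0 < x) :
    Pr n k (fun f S => ¬ NonspecialComponentsBoundedBy x f S) ≤
      n * Real.exp (-(x * k / n)) / x := by
  refine Pr_le_of_card_filter_le (by positivity) fun f => ?_
  set t := ⌈x⌉₊
  have hxt : x ≤ t := Nat.le_ceil x
  have hcount := mul_card_filter_hasLargeAvoidingComponent_le (gnm_mono f) (t := t) k
  rw [Fintype.card_fin] at hcount
  calc _ ≤ (#((univ.powersetCard k).filter (HasLargeAvoidingComponent (gnm f) t)) : ℝ) := by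
        gcongr with S
        exact hasLargeAvoidingComponent_of_not_bounded
    _ ≤ n * (n - t).choose k / t := by
        rw [le_div_iff₀ (hx.trans_le hxt), mul_comm]
        exact_mod_cast hcount
    _ ≤ n * (n.choose k * Real.exp (-(t * k / n))) / x := by
        gcongr
        exact choose_sub_le_choose_mul_exp n t k
    _ ≤ n * (n.choose k * Real.exp (-(x * k / n))) / x := by gcongr
    _ = n * Real.exp (-(x * k / n)) / x * n.choose k := by ring

theorem one_sub_le_Pr_nonspecialComponentsBoundedBy {n k : ℕ} (hn : 2 ≤ n) (hk : 1 ≤ k)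
    (hkn : k ≤ n) :
    1 - k / (n * Real.log n) ≤ Pr n k (NonspecialComponentsBoundedBy (n * Real.log n / k)) := by
  have hnR : (0 : ℝ) < n := by positivity
  have hkR : (0 : ℝ) < k := by exact_mod_cast hk
  have hlog : 0 < Real.log n := Real.log_pos (by exact_mod_cast hn)
  have htail := Pr_not_nonspecialComponentsBoundedBy_le (n := n) (k := k)
    (x := n * Real.log n / k) (by positivity)
  have hbound : (n : ℝ) * Real.exp (-(n * Real.log n / k * k / n)) / (n * Real.log n / k) =
      k / (n * Real.log n) := by
    rw [show (n : ℝ) * Real.log n / k * k / n = Real.log n by field_simp, Real.exp_neg,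
      Real.exp_log hnR]
    field_simp
  linarith [Pr_add_Pr_not hkn (NonspecialComponentsBoundedBy (n := n) (n * Real.log n / k))]

section Asymptotics

variable {k : ℕ → ℕ}

lemma eventually_one_le_of_isLittleO_rpow {p : ℝ} (hp : 0 ≤ p)
    (h : (fun n : ℕ => (n : ℝ) ^ p) =o[atTop] fun n => (k n : ℝ)) : ∀ᶠ n in atTop, 1 ≤ k n := by
  filter_upwards [h.bound one_pos, eventually_ge_atTop 1] with n hn hn1
  rw [Real.norm_of_nonneg (by positivity), Real.norm_natCast, one_mul] at hn
  exact_mod_cast (Real.one_le_rpow (by exact_mod_cast hn1) hp).trans hn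

lemma eventually_one_le_log : ∀ᶠ n : ℕ in atTop, 1 ≤ Real.log n :=
  (Real.tendsto_log_atTop.comp tendsto_natCast_atTop_atTop).eventually_ge_atTop 1

lemma isBigO_div_log_self : (fun n : ℕ => (n : ℝ) / Real.log n) =O[atTop] fun n => (n : ℝ) := by
  refine Asymptotics.IsBigO.of_bound 1 ?_
  filter_upwards [eventually_one_le_log] with n hn
  rw [norm_div, one_mul]
  exact div_le_self (norm_nonneg _) (by rwa [Real.norm_of_nonneg (by linarith)])

lemma isBigO_self_mul_log : (fun n : ℕ => (n : ℝ)) =O[atTop] fun n => (n : ℝ) * Real.log n := by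
  refine Asymptotics.IsBigO.of_bound 1 ?_
  filter_upwards [eventually_one_le_log] with n hn
  rw [norm_mul, one_mul]
  exact le_mul_of_one_le_right (norm_nonneg _) (by rwa [Real.norm_of_nonneg (by linarith)])

end Asymptotics

end

/-- **Lemma (non-special components stay small).** If `n^{1/3} ≪ k ≪ n/log n`, then a.a.s.
for every `m ≥ m₃` the size of every non-special component of `Ĝ_k(n,m)` is at most
`n log n / k`. -/
theorem nonspecial_components_small (k : ℕ → ℕ)
    (hklb : (fun n : ℕ => (n : ℝ) ^ ((1 : ℝ) / 3)) =o[atTop] fun n : ℕ => (k n : ℝ))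
    (hkub : (fun n : ℕ => (k n : ℝ)) =o[atTop] fun n : ℕ => (n : ℝ) / Real.log n) :
    AAS k fun n f S =>
      ∀ m : ℕ, m3 k n ≤ m → ∀ v : Fin n,
        (¬ ∃ a ∈ S, (hatG S f m).Reachable v a) →
        (compSize (hatG S f m) ((hatG S f m).connectedComponentMk v) : ℝ) ≤
          (n : ℝ) * Real.log n / (k n : ℝ) := by
  have hkn : ∀ᶠ n in atTop, k n ≤ n := by
    filter_upwards [(hkub.trans_isBigO isBigO_div_log_self).bound one_pos] with n hn
    rw [Real.norm_natCast, Real.norm_natCast, one_mul] at hn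
    exact_mod_cast hn
  have hdensity : Tendsto (fun n => (k n : ℝ) / (n * Real.log n)) atTop (𝓝 0) :=
    (hkub.trans_isBigO (isBigO_div_log_self.trans isBigO_self_mul_log)).tendsto_div_nhds_zero
  refine tendsto_of_tendsto_of_tendsto_of_le_of_le' (by simpa using tendsto_const_nhds.sub hdensity)
    tendsto_const_nhds ?_ (.of_forall fun n => Pr_le_one _)
  filter_upwards [eventually_ge_atTop 2, eventually_one_le_of_isLittleO_rpow (by norm_num) hklb,
    hkn] with n hn hk hkn
  exact (one_sub_le_Pr_nonspecialComponentsBoundedBy hn hk hkn).trans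
    (Pr_mono fun f S h m _ => h m)
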